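/- arXiv:1608.05832 — 2 statements merged into one kernel-verified Lean document; each statement's English description precedes it below -/
import Mathlib

section
/- The mutation operator M has sensitive dependence on initial conditions on (X_N, d) with sensitivity constant N + (⌊N/2⌋ + 1)/N: there exists δ₀ = N + (⌊N/2⌋ + 1)/N > 0 such that for every X ∈ X_N and every ε > 0 there exist Y ∈ B(X, ε) and n ∈ ℕ with d(M^n(X), M^n(Y)) ≥ δ₀. -/
/-- The discrete metric on ℝ: `ddelta x y = 1` if `x ≠ y`, and `0` otherwise. -/
noncomputable def ddelta (x y : ℝ) : ℝ := if x = y then 0 else 1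

/-- `Fdel (x₁, x₂) = |x₁| + δ(0, x₂)`. -/
noncomputable def Fdel (x : ℝ × ℝ) : ℝ := |x.1| + ddelta 0 x.2

/-- A single mutation: a position in `{1,…,N}` together with a nucleotide in `{1,2,3,4}`
(encoded with `Fin N` and `Fin 4`). -/
abbrev Mut (N : ℕ) := Fin N × Fin 4

/-- A mutations sequence: an infinite sequence of mutations. -/
abbrev MutSeq (N : ℕ) := ℕ → Mut N

/-- A genome of size `N`: a sequence of `N` nucleotides in `{1,2,3,4}` (encoded by `Fin 4`,
where `0,1,2,3` stand for the labels `1,2,3,4`, i.e. `A,C,G,T`). -/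
abbrev Genome (N : ℕ) := Fin N → Fin 4

/-- The phase space `X_N = {1,2,3,4}^N × S_N`. -/
abbrev Phase (N : ℕ) := Genome N × MutSeq N

/-- A mutation regarded as a pair of real numbers, using the labels
`1,…,N` for positions and `1,2,3,4` for nucleotides. -/
noncomputable def mutR {N : ℕ} (m : Mut N) : ℝ × ℝ :=
  ((m.1.1 : ℝ) + 1, (m.2.1 : ℝ) + 1)

/-- `d_G(G, Ǧ) = Σ_{k=1}^{N} δ(G_k, Ǧ_k)`, with `δ` the discrete metric. -/
noncomputable def dG {N : ℕ} (G G' : Genome N) : ℝ :=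
  ∑ k : Fin N, if G k = G' k then (0 : ℝ) else 1

/-- `d_S(S, Š) = (9/N) Σ_{k=0}^{∞} F(S^k − Š^k)/10^(k+1)`. -/
noncomputable def dS {N : ℕ} (S S' : MutSeq N) : ℝ :=
  (9 / N) * ∑' k : ℕ, Fdel (mutR (S k) - mutR (S' k)) / 10 ^ (k + 1)

/-- The distance `d((G,S), (Ǧ,Š)) = d_G(G,Ǧ) + d_S(S,Š)` on the phase space. -/
noncomputable def dX {N : ℕ} (X Y : Phase N) : ℝ := dG X.1 Y.1 + dS X.2 Y.2

/-- The mutation operator `M(G, S) = (G', σ(S))`: the nucleotide of `G` at position `(S⁰)₁`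
is replaced by the nucleotide `(S⁰)₂`, and the mutations sequence is shifted. -/
noncomputable def Mop {N : ℕ} (X : Phase N) : Phase N :=
  (Function.update X.1 (X.2 0).1 (X.2 0).2, fun k => X.2 (k + 1))

/-- A set `U ⊆ X_N` is open for the metric `d` if around any of its points it
contains an open ball of positive radius. -/
def IsOpenD {N : ℕ} (U : Set (Phase N)) : Prop :=
  ∀ x ∈ U, ∃ ε > 0, ∀ y, dX x y < ε → y ∈ U

/-!
Perturb only the mutations after time `m`, which moves the point by at most `10⁻ᵐ`.
The next `N` mutations of the perturbed sequence overwrite every nucleotide by one differing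
from the nucleotide that the unperturbed orbit has at time `n = N + m`, so the genomes are then
at distance `N`. From time `n` on, every mutation is replaced by one with another nucleotide at
the end of `{1,…,N}` farther from its position, at distance at least `⌊N/2⌋`, so every term of
`d_S` is at least `⌊N/2⌋ + 1` and `d_S ≥ (⌊N/2⌋ + 1)/N`.
-/

open Function

section Metric

variable {N : ℕ}

lemma Fdel_mutR_sub (a b : Mut N) :
    Fdel (mutR a - mutR b) = |(a.1.val : ℝ) - b.1.val| + if a.2 = b.2 then 0 else 1 := by
  have hnuc : (0 : ℝ) = (a.2.val : ℝ) - b.2.val ↔ a.2 = b.2 := by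
    rw [eq_comm, sub_eq_zero, Nat.cast_inj, Fin.val_inj]
  simp only [Fdel, ddelta, mutR, Prod.fst_sub, Prod.snd_sub, add_sub_add_right_eq_sub, hnuc]

lemma Fdel_mutR_sub_nonneg (a b : Mut N) : 0 ≤ Fdel (mutR a - mutR b) := by
  rw [Fdel_mutR_sub]
  split_ifs <;> positivity

lemma Fdel_mutR_sub_le (a b : Mut N) : Fdel (mutR a - mutR b) ≤ N := by
  have ha : (a.1.val : ℝ) + 1 ≤ N := by exact_mod_cast a.1.isLt
  have hb : (b.1.val : ℝ) + 1 ≤ N := by exact_mod_cast b.1.isLt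
  have hdist : |(a.1.val : ℝ) - b.1.val| ≤ N - 1 :=
    abs_sub_le_iff.mpr ⟨by linarith [b.1.val.cast_nonneg (α := ℝ)],
      by linarith [a.1.val.cast_nonneg (α := ℝ)]⟩
  rw [Fdel_mutR_sub]
  split_ifs <;> linarith

lemma hasSum_div_ten_pow_succ (c : ℝ) : HasSum (fun k : ℕ ↦ c / 10 ^ (k + 1)) (c / 9) := by
  have hgeom :=
    (hasSum_geometric_of_lt_one (r := (1 : ℝ) / 10) (by norm_num) (by norm_num)).mul_left (c / 10)
  rw [show c / 10 * (1 - 1 / 10)⁻¹ = c / 9 by norm_num; ring] at hgeom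
  refine hgeom.congr_fun fun k ↦ ?_
  rw [pow_succ', one_div_pow]
  field_simp

lemma summable_dS (S S' : MutSeq N) :
    Summable fun k ↦ Fdel (mutR (S k) - mutR (S' k)) / 10 ^ (k + 1) :=
  (hasSum_div_ten_pow_succ N).summable.of_nonneg_of_le
    (fun k ↦ div_nonneg (Fdel_mutR_sub_nonneg _ _) (by positivity))
    (fun k ↦ div_le_div_of_nonneg_right (Fdel_mutR_sub_le _ _) (by positivity))

lemma dS_le_of_eqOn_lt {S S' : MutSeq N} {m : ℕ} (h : ∀ k < m, S k = S' k) :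
    dS S S' ≤ (1 / 10) ^ m := by
  have hN : (0 : ℝ) < N := by exact_mod_cast (S 0).1.pos
  set f := fun k ↦ Fdel (mutR (S k) - mutR (S' k)) / 10 ^ (k + 1)
  have htail : ∑' k, f k = ∑' k, f (k + m) := by
    rw [← (summable_dS S S').sum_add_tsum_nat_add m, Finset.sum_eq_zero, zero_add]
    intro k hk
    simp [h k (Finset.mem_range.mp hk), Fdel, ddelta]
  have hterm (k : ℕ) : f (k + m) ≤ N / 10 ^ m / 10 ^ (k + 1) := by
    rw [div_div, ← pow_add, show m + (k + 1) = k + m + 1 by ring]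
    exact div_le_div_of_nonneg_right (Fdel_mutR_sub_le _ _) (by positivity)
  have hsum : ∑' k, f (k + m) ≤ N / 10 ^ m / 9 := by
    rw [← (hasSum_div_ten_pow_succ _).tsum_eq]
    exact Summable.tsum_le_tsum hterm ((summable_nat_add_iff m).mpr (summable_dS S S'))
      (hasSum_div_ten_pow_succ _).summable
  calc dS S S' = 9 / N * ∑' k, f (k + m) := by rw [dS, ← htail]
    _ ≤ 9 / N * (N / 10 ^ m / 9) := by gcongr
    _ = (1 / 10) ^ m := by rw [one_div_pow]; field_simp

lemma div_le_dS {S S' : MutSeq N} {c : ℝ} (h : ∀ k, c ≤ Fdel (mutR (S k) - mutR (S' k))) :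
    c / N ≤ dS S S' := by
  have hsum : c / 9 ≤ ∑' k, Fdel (mutR (S k) - mutR (S' k)) / 10 ^ (k + 1) := by
    rw [← (hasSum_div_ten_pow_succ c).tsum_eq]
    exact Summable.tsum_le_tsum (fun k ↦ div_le_div_of_nonneg_right (h k) (by positivity))
      (hasSum_div_ten_pow_succ c).summable (summable_dS S S')
  calc c / N = 9 / N * (c / 9) := by ring
    _ ≤ dS S S' := mul_le_mul_of_nonneg_left hsum (by positivity)

lemma dG_self (G : Genome N) : dG G G = 0 := by simp [dG]

lemma dG_eq_of_forall_ne {G G' : Genome N} (h : ∀ k, G k ≠ G' k) : dG G G' = N := by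
  simp [dG, h]

end Metric

section Dynamics

variable {N : ℕ}

lemma Mop_iterate_snd (X : Phase N) (n : ℕ) : (Mop^[n] X).2 = fun k ↦ X.2 (k + n) := by
  induction n generalizing X with
  | zero => rfl
  | succ n ih => rw [iterate_succ_apply, ih]; rfl

lemma Mop_iterate_succ_fst (X : Phase N) (n : ℕ) :
    (Mop^[n + 1] X).1 = update (Mop^[n] X).1 (X.2 n).1 (X.2 n).2 := by
  simp only [iterate_succ_apply', Mop, Mop_iterate_snd, zero_add]

lemma Mop_iterate_fst_of_writes {Y : Phase N} {G : Genome N}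
    (h : ∀ i : Fin N, Y.2 i = (i, G i)) : (Mop^[N] Y).1 = G := by
  have key : ∀ t ≤ N, ∀ j : Fin N, (Mop^[t] Y).1 j = if j.val < t then G j else Y.1 j := by
    intro t
    induction t with
    | zero => simp
    | succ t ih =>
      intro ht j
      rw [Mop_iterate_succ_fst, h ⟨t, ht⟩, update_apply, ih (by omega)]
      by_cases hj : j.val = t
      · obtain rfl : j = ⟨t, ht⟩ := Fin.ext hj
        simp
      · have hj' : j ≠ ⟨t, ht⟩ := fun e ↦ hj (congrArg Fin.val e)
        simp only [hj', if_false, Nat.lt_succ_iff_lt_or_eq, hj, or_false]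
  funext j
  simpa using key N le_rfl j

def farPos (p : Fin N) : Fin N :=
  if 2 * p.val + 1 < N then ⟨N - 1, Nat.sub_one_lt_of_lt p.isLt⟩ else ⟨0, p.pos⟩

lemma div_two_add_one_le_dist_farPos (p : Fin N) :
    ((N / 2 + 1 : ℕ) : ℝ) ≤ |(p.val : ℝ) - (farPos p).val| + 1 := by
  unfold farPos
  split_ifs with hp
  · have hle : ((N / 2 + 1 + p.val : ℕ) : ℝ) ≤ ((N - 1 : ℕ) : ℝ) + 1 := by
      exact_mod_cast (by omega : N / 2 + 1 + p.val ≤ N - 1 + 1)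
    push_cast at hle ⊢
    linarith [neg_abs_le ((p.val : ℝ) - ((N - 1 : ℕ) : ℝ))]
  · have hle : N / 2 + 1 ≤ p.val + 1 := by omega
    simpa using (by exact_mod_cast hle : ((N / 2 + 1 : ℕ) : ℝ) ≤ p.val + 1)

lemma div_two_add_one_le_Fdel_farPos (p : Fin N) {q q' : Fin 4} (hq : q ≠ q') :
    ((N / 2 + 1 : ℕ) : ℝ) ≤ Fdel (mutR (p, q) - mutR (farPos p, q')) := by
  rw [Fdel_mutR_sub, if_neg hq]
  exact div_two_add_one_le_dist_farPos p

def perturb (S : MutSeq N) (m : ℕ) (G : Genome N) : MutSeq N := fun j ↦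
  if j < m then S j
  else if h : j - m < N then (⟨j - m, h⟩, G ⟨j - m, h⟩)
  else (farPos (S j).1, (S j).2 + 1)

section Perturb

variable (S : MutSeq N) (m : ℕ) (G : Genome N)

lemma perturb_of_lt {j : ℕ} (hj : j < m) : perturb S m G j = S j := if_pos hj

lemma perturb_add (i : Fin N) : perturb S m G (i + m) = (i, G i) := by
  simp [perturb]

lemma perturb_of_le {j : ℕ} (hj : N + m ≤ j) :
    perturb S m G j = (farPos (S j).1, (S j).2 + 1) := by
  rw [perturb, if_neg (by omega), dif_neg (by omega)]

lemma dX_perturb_le (X : Phase N) : dX X (X.1, perturb X.2 m G) ≤ (1 / 10) ^ m := by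
  rw [dX, dG_self, zero_add]
  exact dS_le_of_eqOn_lt fun k hk ↦ (perturb_of_lt X.2 m G hk).symm

lemma Mop_iterate_perturb_fst (G₀ : Genome N) : (Mop^[N + m] (G₀, perturb S m G)).1 = G := by
  rw [iterate_add_apply]
  refine Mop_iterate_fst_of_writes fun i ↦ ?_
  rw [Mop_iterate_snd]
  exact perturb_add S m G i

lemma div_le_dS_Mop_iterate_perturb (X : Phase N) (G₀ : Genome N) :
    ((N / 2 + 1 : ℕ) : ℝ) / N ≤
      dS (Mop^[N + m] X).2 (Mop^[N + m] (G₀, perturb X.2 m G)).2 := by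
  rw [Mop_iterate_snd, Mop_iterate_snd]
  refine div_le_dS fun k ↦ ?_
  dsimp only
  rw [perturb_of_le X.2 m G (by omega)]
  exact div_two_add_one_le_Fdel_farPos _ (by simp)

end Perturb

end Dynamics

/-- The mutation operator `M` has sensitive dependence on initial conditions on
`(X_N, d)` with sensitivity constant `δ₀ = N + (⌊N/2⌋ + 1)/N > 0`: for every `X ∈ X_N`
and every `ε > 0` there exist `Y ∈ B(X, ε)` and `n ∈ ℕ` with `d(M^n(X), M^n(Y)) ≥ δ₀`. -/
theorem Mop_sensitive (N : ℕ) (hN : 1 ≤ N) :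
    (0 : ℝ) < (N : ℝ) + ((N / 2 + 1 : ℕ) : ℝ) / (N : ℝ) ∧
    ∀ X : Phase N, ∀ ε > (0 : ℝ),
      ∃ Y : Phase N, dX X Y < ε ∧ ∃ n : ℕ,
        (N : ℝ) + ((N / 2 + 1 : ℕ) : ℝ) / (N : ℝ) ≤
          dX ((Mop (N := N))^[n] X) ((Mop (N := N))^[n] Y) := by
  refine ⟨add_pos_of_pos_of_nonneg (by exact_mod_cast hN) (by positivity), fun X ε hε ↦ ?_⟩
  obtain ⟨m, hm⟩ := exists_pow_lt_of_lt_one hε (by norm_num : (1 : ℝ) / 10 < 1)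
  set G : Genome N := fun j ↦ (Mop^[N + m] X).1 j + 1
  refine ⟨(X.1, perturb X.2 m G), (dX_perturb_le m G X).trans_lt hm, N + m, ?_⟩
  have hdG : dG (Mop^[N + m] X).1 (Mop^[N + m] (X.1, perturb X.2 m G)).1 = N := by
    rw [Mop_iterate_perturb_fst]
    exact dG_eq_of_forall_ne fun j ↦ by simp [G]
  rw [dX, hdG]
  gcongr
  exact div_le_dS_Mop_iterate_perturb m G X X.1
end

section
/- The dynamical system (X_N, M) is topologically mixing: for any pair of nonempty open sets U, V ⊆ X_N, there exists n₀ ∈ ℕ such that for all n ≥ n₀, M^n(U) ∩ V ≠ ∅. -/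
-- AUX

noncomputable def iterG {N : ℕ} (G : Genome N) (S : MutSeq N) : ℕ → Genome N
  | 0 => G
  | n+1 => iterG (Function.update G (S 0).1 (S 0).2) (fun k => S (k+1)) n

lemma Mop_iterate {N : ℕ} (n : ℕ) (G : Genome N) (S : MutSeq N) :
    (Mop (N := N))^[n] (G, S) = (iterG G S n, fun k => S (k + n)) := by
  induction n generalizing G S with
  | zero => simp [iterG]
  | succ n ih =>
    rw [Function.iterate_succ_apply]
    show (Mop (N:=N))^[n] (Function.update G (S 0).1 (S 0).2, fun k => S (k+1)) = _
    rw [ih]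
    refine Prod.ext rfl ?_
    funext k
    exact congrArg S (by omega)

lemma iterG_not_hit {N : ℕ} (L : ℕ) (G : Genome N) (S : MutSeq N) (p : Fin N)
    (h : ∀ k < L, (S k).1 ≠ p) : iterG G S L p = G p := by
  induction L generalizing G S with
  | zero => rfl
  | succ L ih =>
    show iterG (Function.update G (S 0).1 (S 0).2) (fun k => S (k+1)) L p = G p
    rw [ih _ _ (fun k hk => h (k+1) (by omega))]
    exact Function.update_of_ne (Ne.symm (h 0 (Nat.succ_pos L))) _ _

lemma iterG_hit {N : ℕ} (H : Genome N) (L : ℕ) (G : Genome N) (S : MutSeq N) (p : Fin N)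
    (h1 : ∀ k < L, (S k).2 = H (S k).1) (h2 : ∃ k < L, (S k).1 = p) :
    iterG G S L p = H p := by
  induction L generalizing G S with
  | zero => obtain ⟨k, hk, _⟩ := h2; omega
  | succ L ih =>
    show iterG (Function.update G (S 0).1 (S 0).2) (fun k => S (k+1)) L p = H p
    by_cases hc : ∃ k < L, (S (k+1)).1 = p
    · exact ih _ _ (fun k hk => h1 (k+1) (by omega)) hc
    · have h0 : (S 0).1 = p := by
        obtain ⟨k, hk, hkp⟩ := h2
        rcases Nat.eq_zero_or_pos k with rfl | hpos
        · exact hkp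
        · exact absurd ⟨k-1, by omega, by rw [Nat.sub_add_cancel hpos]; exact hkp⟩ hc
      rw [iterG_not_hit _ _ _ _ (fun k hk hkp => hc ⟨k, hk, hkp⟩)]
      rw [← h0, Function.update_self]
      exact h1 0 (Nat.succ_pos L)

lemma iterG_split {N : ℕ} (m L : ℕ) (G : Genome N) (S : MutSeq N) :
    iterG G S (m + L) = iterG (iterG G S m) (fun k => S (m + k)) L := by
  induction m generalizing G S with
  | zero => simp [iterG]
  | succ m ih =>
    have e : m + 1 + L = (m + L) + 1 := by omega
    rw [e]
    show iterG (Function.update G (S 0).1 (S 0).2) (fun k => S (k+1)) (m + L) = _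
    rw [ih]
    have hfun : (fun k => S (m + 1 + k)) = fun k => S (m + k + 1) := by
      funext k; exact congrArg S (by omega)
    rw [hfun]
    rfl

lemma Fdel_nonneg (x : ℝ × ℝ) : 0 ≤ Fdel x := by
  unfold Fdel ddelta
  have := abs_nonneg x.1
  split <;> linarith

lemma Fdel_le {N : ℕ} (a b : Mut N) : Fdel (mutR a - mutR b) ≤ N := by
  have ha : (a.1.1 : ℝ) + 1 ≤ N := by exact_mod_cast a.1.2
  have hb : (b.1.1 : ℝ) + 1 ≤ N := by exact_mod_cast b.1.2
  have ha0 : (0:ℝ) ≤ a.1.1 := Nat.cast_nonneg _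
  have hb0 : (0:ℝ) ≤ b.1.1 := Nat.cast_nonneg _
  unfold Fdel mutR ddelta
  have habs : |((a.1.1 : ℝ) + 1) - ((b.1.1 : ℝ) + 1)| ≤ (N:ℝ) - 1 :=
    abs_le.mpr ⟨by linarith, by linarith⟩
  simp only [Prod.fst_sub, Prod.snd_sub]
  split <;> linarith

lemma tsum_tail_bound (m : ℕ) (f : ℕ → ℝ) (C : ℝ)
    (hf0 : ∀ k, 0 ≤ f k) (hfle : ∀ k, f k ≤ C * (1/10)^(k+1))
    (hzero : ∀ i < m, f i = 0) :
    ∑' k, f k ≤ C * (1/10)^(m+1) * (1 - 1/10)⁻¹ := by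
  have hg : Summable (fun k => C * (1/10 : ℝ)^(k+1)) := by
    have h0 : Summable (fun k : ℕ => ((1:ℝ)/10)^k) :=
      summable_geometric_of_lt_one (by norm_num) (by norm_num)
    have := (h0.mul_left (C * (1/10)))
    refine this.congr (fun k => ?_)
    rw [pow_succ]; ring
  have hf : Summable f := Summable.of_nonneg_of_le hf0 hfle hg
  have hsplit := (Summable.sum_add_tsum_nat_add m hf).symm
  have hfirst : ∑ i ∈ Finset.range m, f i = 0 :=
    Finset.sum_eq_zero (fun i hi => hzero i (Finset.mem_range.mp hi))
  have hg' : Summable (fun k : ℕ => C * (1/10 : ℝ)^(k + m + 1)) :=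
    (summable_nat_add_iff (f := fun k => C * (1/10 : ℝ)^(k+1)) m).2 hg
  have hf' : Summable (fun k : ℕ => f (k + m)) := (summable_nat_add_iff m).2 hf
  have h1 : ∑' k, f (k + m) ≤ ∑' k : ℕ, C * (1/10 : ℝ)^(k + m + 1) :=
    Summable.tsum_le_tsum (fun k => hfle (k + m)) hf' hg'
  have h2 : ∑' k : ℕ, C * (1/10 : ℝ)^(k + m + 1)
      = C * (1/10)^(m+1) * (1 - 1/10)⁻¹ := by
    have he : ∀ k : ℕ, C * (1/10 : ℝ)^(k + m + 1)
        = (C * (1/10)^(m+1)) * (1/10)^k := by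
      intro k; rw [show k + m + 1 = (m+1) + k by omega, pow_add]; ring
    rw [tsum_congr he, tsum_mul_left, tsum_geometric_of_lt_one (by norm_num) (by norm_num)]
  rw [hsplit, hfirst, zero_add]
  linarith

lemma dS_le_of_agree {N : ℕ} (hN : 1 ≤ N) (m : ℕ) (S S' : MutSeq N)
    (h : ∀ k < m, S k = S' k) : dS S S' ≤ (1/10 : ℝ)^m := by
  have key := tsum_tail_bound m
    (fun k => Fdel (mutR (S k) - mutR (S' k)) / 10 ^ (k + 1)) N
    (fun k => div_nonneg (Fdel_nonneg _) (by positivity))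
    (fun k => by
      have e : (N:ℝ) * (1/10)^(k+1) = N / 10^(k+1) := by rw [div_pow, one_pow]; ring
      rw [e]
      apply div_le_div_of_nonneg_right (Fdel_le _ _) (by positivity))
    (fun i hi => by simp [h i hi, Fdel, ddelta])
  have hNpos : (0:ℝ) < N := by exact_mod_cast hN
  have h9 : (0:ℝ) ≤ 9 / N := by positivity
  unfold dS
  calc (9/(N:ℝ)) * ∑' k, Fdel (mutR (S k) - mutR (S' k)) / 10 ^ (k + 1)
      ≤ (9/N) * ((N:ℝ) * (1/10)^(m+1) * (1 - 1/10)⁻¹) :=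
        mul_le_mul_of_nonneg_left key h9
    _ = (1/10 : ℝ)^m := by
        rw [pow_succ]
        field_simp
        ring


/-- The dynamical system `(X_N, M)` is topologically mixing: for any nonempty open sets
`U, V ⊆ X_N`, there is `n₀ ∈ ℕ` such that `M^n(U) ∩ V ≠ ∅` for every `n ≥ n₀`. -/
theorem Mop_topologically_mixing (N : ℕ) (hN : 1 ≤ N) :
    ∀ U V : Set (Phase N), IsOpenD U → IsOpenD V → U.Nonempty → V.Nonempty →
      ∃ n₀ : ℕ, ∀ n : ℕ, n₀ ≤ n → ((Mop (N := N))^[n] '' U ∩ V).Nonempty := by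
  rintro U V hU _hV ⟨⟨G, S⟩, hxU⟩ ⟨⟨H, T⟩, hyV⟩
  obtain ⟨ε, hε, hball⟩ := hU _ hxU
  obtain ⟨m, hm⟩ := exists_pow_lt_of_lt_one hε (by norm_num : (1/10:ℝ) < 1)
  refine ⟨m + N, fun n hn => ?_⟩
  have hNpos : 0 < N := hN
  set pk : ℕ → Fin N := fun k => ⟨(k - m) % N, Nat.mod_lt _ hNpos⟩ with hpk
  set S'' : MutSeq N := fun k =>
    if k < m then S k else if k < n then (pk k, H (pk k)) else T (k - n) with hS''
  have hzU : ((G, S'') : Phase N) ∈ U := by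
    apply hball
    have hagree : ∀ k < m, S k = S'' k := by
      intro k hk; simp [hS'', hk]
    have hdg : dG G G = 0 := by simp [dG]
    have := dS_le_of_agree hN m S S'' hagree
    show dG G G + dS S S'' < ε
    rw [hdg]; linarith
  have hiter : (Mop (N := N))^[n] (G, S'') = (H, T) := by
    rw [Mop_iterate]
    refine Prod.ext ?_ ?_
    · show iterG G S'' n = H
      rw [show n = m + (n - m) by omega, iterG_split]
      funext p
      refine iterG_hit H _ _ _ p ?_ ?_
      · intro k hk
        have h1 : ¬ (m + k < m) := by omega
        have h2 : m + k < n := by omega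
        simp [hS'', h1, h2]
      · refine ⟨p.1, by omega, ?_⟩
        have h1 : ¬ (m + p.1 < m) := by omega
        have h2 : m + p.1 < n := by have := p.2; omega
        simp only [hS'', h1, h2, if_false, if_true]
        ext
        simp [hpk, Nat.mod_eq_of_lt p.2]
    · funext k
      show S'' (k + n) = T k
      have h1 : ¬ (k + n < m) := by omega
      have h2 : ¬ (k + n < n) := by omega
      simp [hS'', h1, h2]
  exact ⟨(H, T), ⟨(G, S''), hzU, hiter⟩, hyV⟩
end
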